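/- arXiv:2605.06661 — 4 statements merged into one kernel-verified Lean document; each statement's English description precedes it below -/
import Mathlib

section
/- Fubini theorem for coends (Type-valued): for a functor F : (C × D)ᵒᵖ × (C × D) ⥤ Type, the three objects ∫^{c ∈ C} ∫^{d ∈ D} F(c,d,c,d), ∫^{(c,d) ∈ C × D} F(c,d,c,d), and ∫^{d ∈ D} ∫^{c ∈ C} F(c,d,c,d) exist and are canonically isomorphic, compatibly with the coprojections. -/
open CategoryTheory Opposite

universe u

variable {C D : Type u} [SmallCategory C] [SmallCategory D]

/-- A morphism in the product category `C × D` given by a pair of morphisms. -/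
def pmor {c c' : C} {d d' : D} (f : c ⟶ c') (k : d ⟶ d') :
    ((c, d) : C × D) ⟶ ((c', d') : C × D) := (f, k)

/-- The opposite of a morphism in `C × D`. -/
def pop {X Y : C × D} (f : X ⟶ Y) : op Y ⟶ op X := f.op

/-- The `D`-balancing relation computing, for fixed `c, c' : C`, the coend
`∫^d F (c, d, c', d)` as a quotient of `Σ d, F (c, d, c', d)`. -/
def dRel (F : (C × D)ᵒᵖ × (C × D) ⥤ Type u) (c c' : C) :
    (Σ d : D, F.obj (op (c, d), (c', d))) →
      (Σ d : D, F.obj (op (c, d), (c', d))) → Prop :=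
  fun X Y => ∃ (d d' : D) (k : d ⟶ d') (z : F.obj (op (c, d'), (c', d))),
    X = ⟨d, F.map ((pop (pmor (𝟙 c) k), 𝟙 ((c', d) : C × D)) :
        ((op (c, d'), (c', d)) : (C × D)ᵒᵖ × (C × D)) ⟶ (op (c, d), (c', d))) z⟩ ∧
    Y = ⟨d', F.map ((𝟙 (op ((c, d') : C × D)), pmor (𝟙 c') k) :
        ((op (c, d'), (c', d)) : (C × D)ᵒᵖ × (C × D)) ⟶ (op (c, d'), (c', d'))) z⟩

/-- The inner coend `∫^d F (c, d, c', d)`, for fixed `c, c' : C`. -/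
def InnerD (F : (C × D)ᵒᵖ × (C × D) ⥤ Type u) (c c' : C) : Type u :=
  Quot (dRel F c c')

/-- Functoriality of the inner coend `∫^d F (c, d, c', d)` in `c` (contravariantly) and
in `c'` (covariantly). -/
def InnerD.map (F : (C × D)ᵒᵖ × (C × D) ⥤ Type u) {c₁ c₂ c₁' c₂' : C}
    (f : c₂ ⟶ c₁) (g : c₁' ⟶ c₂') : InnerD F c₁ c₁' → InnerD F c₂ c₂' :=
  Quot.lift
    (fun X => Quot.mk (dRel F c₂ c₂')
      ⟨X.1, F.map ((pop (pmor f (𝟙 X.1)), pmor g (𝟙 X.1)) :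
        ((op (c₁, X.1), (c₁', X.1)) : (C × D)ᵒᵖ × (C × D)) ⟶
          (op (c₂, X.1), (c₂', X.1))) X.2⟩)
    (by
      rintro _ _ ⟨d, d', k, z, rfl, rfl⟩
      dsimp only
      have h₁ : F.map ((pop (pmor f (𝟙 d)), pmor g (𝟙 d)) :
            ((op (c₁, d), (c₁', d)) : (C × D)ᵒᵖ × (C × D)) ⟶ (op (c₂, d), (c₂', d)))
          (F.map ((pop (pmor (𝟙 c₁) k), 𝟙 ((c₁', d) : C × D)) :
            ((op (c₁, d'), (c₁', d)) : (C × D)ᵒᵖ × (C × D)) ⟶ (op (c₁, d), (c₁', d))) z) =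
          F.map ((pop (pmor (𝟙 c₂) k), 𝟙 ((c₂', d) : C × D)) :
            ((op (c₂, d'), (c₂', d)) : (C × D)ᵒᵖ × (C × D)) ⟶ (op (c₂, d), (c₂', d)))
          (F.map ((pop (pmor f (𝟙 d')), pmor g (𝟙 d)) :
            ((op (c₁, d'), (c₁', d)) : (C × D)ᵒᵖ × (C × D)) ⟶ (op (c₂, d'), (c₂', d))) z) := by
        rw [← FunctorToTypes.map_comp_apply, ← FunctorToTypes.map_comp_apply]
        refine congrArg (fun m => F.map m z) ?_
        apply CategoryTheory.Prod.hom_ext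
        · apply Quiver.Hom.unop_inj
          apply CategoryTheory.Prod.hom_ext <;> simp [pop, pmor]
        · apply CategoryTheory.Prod.hom_ext <;> simp [pop, pmor]
      have h₂ : F.map ((pop (pmor f (𝟙 d')), pmor g (𝟙 d')) :
            ((op (c₁, d'), (c₁', d')) : (C × D)ᵒᵖ × (C × D)) ⟶ (op (c₂, d'), (c₂', d')))
          (F.map ((𝟙 (op ((c₁, d') : C × D)), pmor (𝟙 c₁') k) :
            ((op (c₁, d'), (c₁', d)) : (C × D)ᵒᵖ × (C × D)) ⟶ (op (c₁, d'), (c₁', d'))) z) =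
          F.map ((𝟙 (op ((c₂, d') : C × D)), pmor (𝟙 c₂') k) :
            ((op (c₂, d'), (c₂', d)) : (C × D)ᵒᵖ × (C × D)) ⟶ (op (c₂, d'), (c₂', d')))
          (F.map ((pop (pmor f (𝟙 d')), pmor g (𝟙 d)) :
            ((op (c₁, d'), (c₁', d)) : (C × D)ᵒᵖ × (C × D)) ⟶ (op (c₂, d'), (c₂', d))) z) := by
        rw [← FunctorToTypes.map_comp_apply, ← FunctorToTypes.map_comp_apply]
        refine congrArg (fun m => F.map m z) ?_
        apply CategoryTheory.Prod.hom_ext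
        · apply Quiver.Hom.unop_inj
          apply CategoryTheory.Prod.hom_ext <;> simp [pop, pmor]
        · apply CategoryTheory.Prod.hom_ext <;> simp [pop, pmor]
      rw [h₁, h₂]
      exact Quot.sound ⟨d, d', k, _, rfl, rfl⟩)

/-- The outer `C`-balancing relation computing the iterated coend
`∫^c ∫^d F (c, d, c, d)`. -/
def cdRel (F : (C × D)ᵒᵖ × (C × D) ⥤ Type u) :
    (Σ c : C, InnerD F c c) → (Σ c : C, InnerD F c c) → Prop :=
  fun X Y => ∃ (c c' : C) (f : c ⟶ c') (t : InnerD F c' c),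
    X = ⟨c', InnerD.map F (𝟙 c') f t⟩ ∧ Y = ⟨c, InnerD.map F f (𝟙 c) t⟩

/-- The `C`-balancing relation computing, for fixed `d, d' : D`, the coend
`∫^c F (c, d, c, d')`. -/
def cRel (F : (C × D)ᵒᵖ × (C × D) ⥤ Type u) (d d' : D) :
    (Σ c : C, F.obj (op (c, d), (c, d'))) →
      (Σ c : C, F.obj (op (c, d), (c, d'))) → Prop :=
  fun X Y => ∃ (c c' : C) (f : c ⟶ c') (z : F.obj (op (c', d), (c, d'))),
    X = ⟨c, F.map ((pop (pmor f (𝟙 d)), 𝟙 ((c, d') : C × D)) :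
        ((op (c', d), (c, d')) : (C × D)ᵒᵖ × (C × D)) ⟶ (op (c, d), (c, d'))) z⟩ ∧
    Y = ⟨c', F.map ((𝟙 (op ((c', d) : C × D)), pmor f (𝟙 d')) :
        ((op (c', d), (c, d')) : (C × D)ᵒᵖ × (C × D)) ⟶ (op (c', d), (c', d'))) z⟩

/-- The inner coend `∫^c F (c, d, c, d')`, for fixed `d, d' : D`. -/
def InnerC (F : (C × D)ᵒᵖ × (C × D) ⥤ Type u) (d d' : D) : Type u :=
  Quot (cRel F d d')

/-- Functoriality of the inner coend `∫^c F (c, d, c, d')` in `d` (contravariantly) and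
in `d'` (covariantly). -/
def InnerC.map (F : (C × D)ᵒᵖ × (C × D) ⥤ Type u) {d₁ d₂ d₁' d₂' : D}
    (k : d₂ ⟶ d₁) (l : d₁' ⟶ d₂') : InnerC F d₁ d₁' → InnerC F d₂ d₂' :=
  Quot.lift
    (fun X => Quot.mk (cRel F d₂ d₂')
      ⟨X.1, F.map ((pop (pmor (𝟙 X.1) k), pmor (𝟙 X.1) l) :
        ((op (X.1, d₁), (X.1, d₁')) : (C × D)ᵒᵖ × (C × D)) ⟶
          (op (X.1, d₂), (X.1, d₂'))) X.2⟩)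
    (by
      rintro _ _ ⟨c, c', f, z, rfl, rfl⟩
      dsimp only
      have h₁ : F.map ((pop (pmor (𝟙 c) k), pmor (𝟙 c) l) :
            ((op (c, d₁), (c, d₁')) : (C × D)ᵒᵖ × (C × D)) ⟶ (op (c, d₂), (c, d₂')))
          (F.map ((pop (pmor f (𝟙 d₁)), 𝟙 ((c, d₁') : C × D)) :
            ((op (c', d₁), (c, d₁')) : (C × D)ᵒᵖ × (C × D)) ⟶ (op (c, d₁), (c, d₁'))) z) =
          F.map ((pop (pmor f (𝟙 d₂)), 𝟙 ((c, d₂') : C × D)) :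
            ((op (c', d₂), (c, d₂')) : (C × D)ᵒᵖ × (C × D)) ⟶ (op (c, d₂), (c, d₂')))
          (F.map ((pop (pmor (𝟙 c') k), pmor (𝟙 c) l) :
            ((op (c', d₁), (c, d₁')) : (C × D)ᵒᵖ × (C × D)) ⟶ (op (c', d₂), (c, d₂'))) z) := by
        rw [← FunctorToTypes.map_comp_apply, ← FunctorToTypes.map_comp_apply]
        refine congrArg (fun m => F.map m z) ?_
        apply CategoryTheory.Prod.hom_ext
        · apply Quiver.Hom.unop_inj
          apply CategoryTheory.Prod.hom_ext <;> simp [pop, pmor]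
        · apply CategoryTheory.Prod.hom_ext <;> simp [pop, pmor]
      have h₂ : F.map ((pop (pmor (𝟙 c') k), pmor (𝟙 c') l) :
            ((op (c', d₁), (c', d₁')) : (C × D)ᵒᵖ × (C × D)) ⟶ (op (c', d₂), (c', d₂')))
          (F.map ((𝟙 (op ((c', d₁) : C × D)), pmor f (𝟙 d₁')) :
            ((op (c', d₁), (c, d₁')) : (C × D)ᵒᵖ × (C × D)) ⟶ (op (c', d₁), (c', d₁'))) z) =
          F.map ((𝟙 (op ((c', d₂) : C × D)), pmor f (𝟙 d₂')) :
            ((op (c', d₂), (c, d₂')) : (C × D)ᵒᵖ × (C × D)) ⟶ (op (c', d₂), (c', d₂')))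
          (F.map ((pop (pmor (𝟙 c') k), pmor (𝟙 c) l) :
            ((op (c', d₁), (c, d₁')) : (C × D)ᵒᵖ × (C × D)) ⟶ (op (c', d₂), (c, d₂'))) z) := by
        rw [← FunctorToTypes.map_comp_apply, ← FunctorToTypes.map_comp_apply]
        refine congrArg (fun m => F.map m z) ?_
        apply CategoryTheory.Prod.hom_ext
        · apply Quiver.Hom.unop_inj
          apply CategoryTheory.Prod.hom_ext <;> simp [pop, pmor]
        · apply CategoryTheory.Prod.hom_ext <;> simp [pop, pmor]
      rw [h₁, h₂]
      exact Quot.sound ⟨c, c', f, _, rfl, rfl⟩)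

/-- The outer `D`-balancing relation computing the iterated coend
`∫^d ∫^c F (c, d, c, d)`. -/
def dcRel (F : (C × D)ᵒᵖ × (C × D) ⥤ Type u) :
    (Σ d : D, InnerC F d d) → (Σ d : D, InnerC F d d) → Prop :=
  fun X Y => ∃ (d d' : D) (k : d ⟶ d') (t : InnerC F d' d),
    X = ⟨d', InnerC.map F (𝟙 d') k t⟩ ∧ Y = ⟨d, InnerC.map F k (𝟙 d) t⟩

/-- The balancing relation for morphisms of the product category `C × D`, computing the
total coend `∫^{(c, d)} F (c, d, c, d)`. -/
def totRel (F : (C × D)ᵒᵖ × (C × D) ⥤ Type u) :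
    (Σ p : C × D, F.obj (op p, p)) → (Σ p : C × D, F.obj (op p, p)) → Prop :=
  fun X Y => ∃ (p p' : C × D) (f : p ⟶ p') (z : F.obj (op p', p)),
    X = ⟨p', F.map ((𝟙 (op p'), f) : ((op p', p) : (C × D)ᵒᵖ × (C × D)) ⟶ (op p', p')) z⟩ ∧
    Y = ⟨p, F.map ((pop f, 𝟙 p) : ((op p', p) : (C × D)ᵒᵖ × (C × D)) ⟶ (op p, p)) z⟩

/-!
A morphism `(f, k)` of `C × D` factors as `(1, k)` followed by `(f, 1)`. Hence each generator
of the balancing relation of the total coend becomes, after this factorization, a `D`-balancing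
step inside an inner coend followed by a `C`-balancing step of the outer coend, so
`⟨(c, d), x⟩ ↦ ⟨c, ⟨d, x⟩⟩` is well defined. Conversely the inner and outer balancing relations
are special cases of the total one (with `f = 1` or `k = 1`), so `⟨c, ⟨d, x⟩⟩ ↦ ⟨(c, d), x⟩` is
well defined too, and the two maps are mutually inverse on generators.
-/

open CategoryTheory.Prod

namespace CoendFubini

@[simp]
lemma pmor_eq_mkHom {c c' : C} {d d' : D} (f : c ⟶ c') (k : d ⟶ d') : pmor f k = f ×ₘ k := rfl

@[simp]
lemma pop_comp_pop {X Y Z : C × D} (f : X ⟶ Y) (g : Y ⟶ Z) : pop g ≫ pop f = pop (f ≫ g) := rfl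

@[simp]
lemma pop_mkHom_id (c : C) (d : D) : pop (𝟙 c ×ₘ 𝟙 d) = 𝟙 (op (c, d)) := rfl

lemma mkHom_comp_mkHom {X X' X'' : (C × D)ᵒᵖ} {Y Y' Y'' : C × D} (a : X ⟶ X') (a' : X' ⟶ X'')
    (b : Y ⟶ Y') (b' : Y' ⟶ Y'') :
    ((a ×ₘ b) ≫ (a' ×ₘ b') : ((X, Y) : (C × D)ᵒᵖ × (C × D)) ⟶ (X'', Y'')) =
      (a ≫ a') ×ₘ (b ≫ b') :=
  rfl

variable (F : (C × D)ᵒᵖ × (C × D) ⥤ Type u)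

def toCD : Quot (totRel F) → Quot (cdRel F) :=
  Quot.lift (fun X => Quot.mk _ ⟨X.1.1, Quot.mk (dRel F X.1.1 X.1.1) ⟨X.1.2, X.2⟩⟩) <| by
    rintro _ _ ⟨⟨c, d⟩, ⟨c', d'⟩, f, z, rfl, rfl⟩
    let t : InnerD F c' c := Quot.mk _ ⟨d, F.map ((pop (pmor (𝟙 c') f.2), 𝟙 ((c, d) : C × D)) :
        ((op (c', d'), (c, d)) : (C × D)ᵒᵖ × (C × D)) ⟶ (op (c', d), (c, d))) z⟩
    calc _ = Quot.mk (cdRel F) ⟨c', InnerD.map F (𝟙 c') f.1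
            (Quot.mk _ ⟨d', F.map ((𝟙 (op ((c', d') : C × D)), pmor (𝟙 c) f.2) :
              ((op (c', d'), (c, d)) : (C × D)ᵒᵖ × (C × D)) ⟶ (op (c', d'), (c, d'))) z⟩)⟩ := by
          simp only [InnerD.map, ← Functor.map_comp_apply]
          rw [mkHom_comp_mkHom]
          simp
      _ = Quot.mk (cdRel F) ⟨c', InnerD.map F (𝟙 c') f.1 t⟩ := by
          rw [← Quot.sound (r := dRel F c' c) ⟨d, d', f.2, z, rfl, rfl⟩]
      _ = Quot.mk (cdRel F) ⟨c, InnerD.map F f.1 (𝟙 c) t⟩ := Quot.sound ⟨c, c', f.1, t, rfl, rfl⟩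
      _ = _ := by
          simp only [t, InnerD.map, ← Functor.map_comp_apply]
          rw [mkHom_comp_mkHom]
          simp

def InnerD.toTot (c : C) : InnerD F c c → Quot (totRel F) :=
  Quot.lift (fun Y => Quot.mk (totRel F) ⟨(c, Y.1), Y.2⟩) <| by
    rintro _ _ ⟨d, d', k, z, rfl, rfl⟩
    exact (Quot.sound ⟨(c, d), (c, d'), pmor (𝟙 c) k, z, rfl, rfl⟩).symm

def ofCD : Quot (cdRel F) → Quot (totRel F) :=
  Quot.lift (fun X => InnerD.toTot F X.1 X.2) <| by
    rintro _ _ ⟨c, c', f, t, rfl, rfl⟩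
    induction t using Quot.ind with
    | mk Y => exact Quot.sound ⟨(c, Y.1), (c', Y.1), pmor f (𝟙 Y.1), Y.2, rfl, rfl⟩

def equivCD : Quot (totRel F) ≃ Quot (cdRel F) where
  toFun := toCD F
  invFun := ofCD F
  left_inv := Quot.ind fun _ => rfl
  right_inv := Quot.ind fun ⟨_, t⟩ => by induction t using Quot.ind; rfl

def toDC : Quot (totRel F) → Quot (dcRel F) :=
  Quot.lift (fun X => Quot.mk _ ⟨X.1.2, Quot.mk (cRel F X.1.2 X.1.2) ⟨X.1.1, X.2⟩⟩) <| by
    rintro _ _ ⟨⟨c, d⟩, ⟨c', d'⟩, f, z, rfl, rfl⟩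
    let t : InnerC F d' d := Quot.mk _ ⟨c, F.map ((pop (pmor f.1 (𝟙 d')), 𝟙 ((c, d) : C × D)) :
        ((op (c', d'), (c, d)) : (C × D)ᵒᵖ × (C × D)) ⟶ (op (c, d'), (c, d))) z⟩
    calc _ = Quot.mk (dcRel F) ⟨d', InnerC.map F (𝟙 d') f.2
            (Quot.mk _ ⟨c', F.map ((𝟙 (op ((c', d') : C × D)), pmor f.1 (𝟙 d)) :
              ((op (c', d'), (c, d)) : (C × D)ᵒᵖ × (C × D)) ⟶ (op (c', d'), (c', d))) z⟩)⟩ := by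
          simp only [InnerC.map, ← Functor.map_comp_apply]
          rw [mkHom_comp_mkHom]
          simp
      _ = Quot.mk (dcRel F) ⟨d', InnerC.map F (𝟙 d') f.2 t⟩ := by
          rw [← Quot.sound (r := cRel F d' d) ⟨c, c', f.1, z, rfl, rfl⟩]
      _ = Quot.mk (dcRel F) ⟨d, InnerC.map F f.2 (𝟙 d) t⟩ := Quot.sound ⟨d, d', f.2, t, rfl, rfl⟩
      _ = _ := by
          simp only [t, InnerC.map, ← Functor.map_comp_apply]
          rw [mkHom_comp_mkHom]
          simp

def InnerC.toTot (d : D) : InnerC F d d → Quot (totRel F) :=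
  Quot.lift (fun Y => Quot.mk (totRel F) ⟨(Y.1, d), Y.2⟩) <| by
    rintro _ _ ⟨c, c', f, z, rfl, rfl⟩
    exact (Quot.sound ⟨(c, d), (c', d), pmor f (𝟙 d), z, rfl, rfl⟩).symm

def ofDC : Quot (dcRel F) → Quot (totRel F) :=
  Quot.lift (fun X => InnerC.toTot F X.1 X.2) <| by
    rintro _ _ ⟨d, d', k, t, rfl, rfl⟩
    induction t using Quot.ind with
    | mk Y => exact Quot.sound ⟨(Y.1, d), (Y.1, d'), pmor (𝟙 Y.1) k, Y.2, rfl, rfl⟩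

def equivDC : Quot (totRel F) ≃ Quot (dcRel F) where
  toFun := toDC F
  invFun := ofDC F
  left_inv := Quot.ind fun _ => rfl
  right_inv := Quot.ind fun ⟨_, t⟩ => by induction t using Quot.ind; rfl

end CoendFubini

/-- Fubini theorem for coends: the two iterated coends `∫^c ∫^d F (c, d, c, d)` and
`∫^d ∫^c F (c, d, c, d)` and the total coend `∫^{(c, d)} F (c, d, c, d)` all exist and
are canonically isomorphic, compatibly with the coprojections. -/
theorem stmt_4 (F : (C × D)ᵒᵖ × (C × D) ⥤ Type u) :
    ∃ (φ : Quot (totRel F) → Quot (cdRel F)) (ψ : Quot (totRel F) → Quot (dcRel F)),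
      Function.Bijective φ ∧ Function.Bijective ψ ∧
      (∀ (c : C) (d : D) (x : F.obj (op (c, d), (c, d))),
        φ (Quot.mk (totRel F) ⟨(c, d), x⟩) =
          Quot.mk (cdRel F) ⟨c, Quot.mk (dRel F c c) ⟨d, x⟩⟩) ∧
      (∀ (c : C) (d : D) (x : F.obj (op (c, d), (c, d))),
        ψ (Quot.mk (totRel F) ⟨(c, d), x⟩) =
          Quot.mk (dcRel F) ⟨d, Quot.mk (cRel F d d) ⟨c, x⟩⟩) :=
  ⟨CoendFubini.equivCD F, CoendFubini.equivDC F, (CoendFubini.equivCD F).bijective,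
    (CoendFubini.equivDC F).bijective, fun _ _ _ => rfl, fun _ _ _ => rfl⟩
end

section
/- Modules over a promonad are presheaves on its Eilenberg–Moore category: let (T, μ, η) be a promonad on a category C. A left T-module (from the point) is a functor P : Cᵒᵖ ⥤ Type equipped with an action κ : T • P ⟹ P (where (T • P)(a) = ∫^b P(b) × T(a,b)) satisfying associativity with μ and unitality with η; morphisms are natural transformations commuting with the actions. Then the category of left T-modules is equivalent to the functor category T̃ᵒᵖ ⥤ Type, where T̃ is the Eilenberg–Moore category of T: a T-module P extends uniquely to a presheaf on T̃ with the action of T(a,b) given by κ, and conversely every presheaf on T̃ restricts along the canonical functor C ⥤ T̃ to a T-module. -/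
/-!
A `T`-module structure on `P` lets every `t ∈ T(a, b)` act as a map `P(b) → P(a)`, and
associativity and unitality of the action say precisely that this is a presheaf on `T̃`.
Conversely the restriction maps of a module are recovered from its action, because
balancing and unitality force `η(f)` to act as `P(f)`; hence restricting along the
identity-on-objects functor `C ⥤ T̃`, `f ↦ η(f)`, inverts the construction.
-/

open CategoryTheory Opposite

universe u

variable {B C D E : Type u} [SmallCategory B] [SmallCategory C] [SmallCategory D]
  [SmallCategory E]

/-- The balancing relation defining the coend `(G • F) (e, c) = ∫^d F (d, c) × G (e, d)`
computing the composition of the profunctors `F : C ↛ D` and `G : D ↛ E`. -/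
def pCompRel (F : Dᵒᵖ × C ⥤ Type u) (G : Eᵒᵖ × D ⥤ Type u) (e : Eᵒᵖ) (c : C) :
    (Σ d : D, F.obj (op d, c) × G.obj (e, d)) →
      (Σ d : D, F.obj (op d, c) × G.obj (e, d)) → Prop :=
  fun X Y => ∃ (d d' : D) (k : d ⟶ d') (u : F.obj (op d', c)) (v : G.obj (e, d)),
    X = ⟨d, (F.map ((k.op, 𝟙 c) : ((op d', c) : Dᵒᵖ × C) ⟶ (op d, c)) u, v)⟩ ∧
    Y = ⟨d', (u, G.map ((𝟙 e, k) : ((e, d) : Eᵒᵖ × D) ⟶ (e, d')) v)⟩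

theorem pCompRel_mk_eq (F : Dᵒᵖ × C ⥤ Type u) (G : Eᵒᵖ × D ⥤ Type u) {e : Eᵒᵖ} {c : C}
    {d d' : D} (k : d ⟶ d') (u : F.obj (op d', c)) (v : G.obj (e, d)) :
    Quot.mk (pCompRel F G e c)
        ⟨d, (F.map ((k.op, 𝟙 c) : ((op d', c) : Dᵒᵖ × C) ⟶ (op d, c)) u, v)⟩ =
      Quot.mk (pCompRel F G e c)
        ⟨d', (u, G.map ((𝟙 e, k) : ((e, d) : Eᵒᵖ × D) ⟶ (e, d')) v)⟩ :=
  Quot.sound ⟨d, d', k, u, v, rfl, rfl⟩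

/-- The composition `G • F : C ↛ E` of profunctors `F : C ↛ D` and `G : D ↛ E`, defined
by the coend formula `(G • F) (e, c) = ∫^d F (d, c) × G (e, d)`. -/
def profComp (F : Dᵒᵖ × C ⥤ Type u) (G : Eᵒᵖ × D ⥤ Type u) : Eᵒᵖ × C ⥤ Type u where
  obj p := Quot (pCompRel F G p.1 p.2)
  map {p q} φ := TypeCat.ofHom (Quot.lift
    (fun (X : Σ d : D, F.obj (op d, p.2) × G.obj (p.1, d)) => Quot.mk (pCompRel F G q.1 q.2)
      ⟨X.1, (F.map ((𝟙 (op X.1), φ.2) : ((op X.1, p.2) : Dᵒᵖ × C) ⟶ (op X.1, q.2)) X.2.1,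
             G.map ((φ.1, 𝟙 X.1) : ((p.1, X.1) : Eᵒᵖ × D) ⟶ (q.1, X.1)) X.2.2)⟩)
    (by
      rintro _ _ ⟨d, d', k, u, v, rfl, rfl⟩
      dsimp only
      have h₁ : F.map ((𝟙 (op d), φ.2) : ((op d, p.2) : Dᵒᵖ × C) ⟶ (op d, q.2))
            (F.map ((k.op, 𝟙 p.2) : ((op d', p.2) : Dᵒᵖ × C) ⟶ (op d, p.2)) u) =
          F.map ((k.op, 𝟙 q.2) : ((op d', q.2) : Dᵒᵖ × C) ⟶ (op d, q.2))
            (F.map ((𝟙 (op d'), φ.2) : ((op d', p.2) : Dᵒᵖ × C) ⟶ (op d', q.2)) u) := by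
        rw [← FunctorToTypes.map_comp_apply, ← FunctorToTypes.map_comp_apply]
        refine congrArg (fun m => F.map m u) ?_
        apply CategoryTheory.Prod.hom_ext <;> simp
      have h₂ : G.map ((φ.1, 𝟙 d') : ((p.1, d') : Eᵒᵖ × D) ⟶ (q.1, d'))
            (G.map ((𝟙 p.1, k) : ((p.1, d) : Eᵒᵖ × D) ⟶ (p.1, d')) v) =
          G.map ((𝟙 q.1, k) : ((q.1, d) : Eᵒᵖ × D) ⟶ (q.1, d'))
            (G.map ((φ.1, 𝟙 d) : ((p.1, d) : Eᵒᵖ × D) ⟶ (q.1, d)) v) := by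
        rw [← FunctorToTypes.map_comp_apply, ← FunctorToTypes.map_comp_apply]
        refine congrArg (fun m => G.map m v) ?_
        apply CategoryTheory.Prod.hom_ext <;> simp
      rw [h₁, h₂]
      exact pCompRel_mk_eq F G k _ _))
  map_id p := by
    obtain ⟨e, c⟩ := p
    ext X
    induction X using Quot.ind with
    | _ Y =>
      obtain ⟨d, u, v⟩ := Y
      show Quot.mk (pCompRel F G e c)
          ⟨d, (F.map ((𝟙 (op d), 𝟙 c) : ((op d, c) : Dᵒᵖ × C) ⟶ (op d, c)) u,
               G.map ((𝟙 e, 𝟙 d) : ((e, d) : Eᵒᵖ × D) ⟶ (e, d)) v)⟩ =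
        Quot.mk (pCompRel F G e c) ⟨d, (u, v)⟩
      rw [show ((𝟙 (op d), 𝟙 c) : ((op d, c) : Dᵒᵖ × C) ⟶ (op d, c)) = 𝟙 (op d, c) from rfl,
        show ((𝟙 e, 𝟙 d) : ((e, d) : Eᵒᵖ × D) ⟶ (e, d)) = 𝟙 (e, d) from rfl,
        FunctorToTypes.map_id_apply, FunctorToTypes.map_id_apply]
  map_comp {p q r} φ ψ := by
    ext X
    induction X using Quot.ind with
    | _ Y =>
    obtain ⟨d, u, v⟩ := Y
    show Quot.mk (pCompRel F G r.1 r.2)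
        ⟨d, (F.map ((𝟙 (op d), φ.2 ≫ ψ.2) : ((op d, p.2) : Dᵒᵖ × C) ⟶ (op d, r.2)) u,
             G.map ((φ.1 ≫ ψ.1, 𝟙 d) : ((p.1, d) : Eᵒᵖ × D) ⟶ (r.1, d)) v)⟩ =
      Quot.mk (pCompRel F G r.1 r.2)
        ⟨d, (F.map ((𝟙 (op d), ψ.2) : ((op d, q.2) : Dᵒᵖ × C) ⟶ (op d, r.2))
               (F.map ((𝟙 (op d), φ.2) : ((op d, p.2) : Dᵒᵖ × C) ⟶ (op d, q.2)) u),
             G.map ((ψ.1, 𝟙 d) : ((q.1, d) : Eᵒᵖ × D) ⟶ (r.1, d))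
               (G.map ((φ.1, 𝟙 d) : ((p.1, d) : Eᵒᵖ × D) ⟶ (q.1, d)) v))⟩
    have h₁ : F.map ((𝟙 (op d), φ.2 ≫ ψ.2) : ((op d, p.2) : Dᵒᵖ × C) ⟶ (op d, r.2)) u =
        F.map ((𝟙 (op d), ψ.2) : ((op d, q.2) : Dᵒᵖ × C) ⟶ (op d, r.2))
          (F.map ((𝟙 (op d), φ.2) : ((op d, p.2) : Dᵒᵖ × C) ⟶ (op d, q.2)) u) := by
      rw [← FunctorToTypes.map_comp_apply]
      refine congrArg (fun m => F.map m u) ?_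
      apply CategoryTheory.Prod.hom_ext <;> simp
    have h₂ : G.map ((φ.1 ≫ ψ.1, 𝟙 d) : ((p.1, d) : Eᵒᵖ × D) ⟶ (r.1, d)) v =
        G.map ((ψ.1, 𝟙 d) : ((q.1, d) : Eᵒᵖ × D) ⟶ (r.1, d))
          (G.map ((φ.1, 𝟙 d) : ((p.1, d) : Eᵒᵖ × D) ⟶ (q.1, d)) v) := by
      rw [← FunctorToTypes.map_comp_apply]
      refine congrArg (fun m => G.map m v) ?_
      apply CategoryTheory.Prod.hom_ext <;> simp
    rw [h₁, h₂]


variable (T : Cᵒᵖ × C ⥤ Type u)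

/-- Composition in the Eilenberg–Moore category of a promonad `(T, μ, η)`, induced by
the multiplication `μ` via the coprojections of the coend
`(T • T) (a, c) = ∫^b T (a, b) × T (b, c)`. -/
def emComp (μ : profComp T T ⟶ T) {a b c : C}
    (f : T.obj (op a, b)) (g : T.obj (op b, c)) : T.obj (op a, c) :=
  μ.app (op a, c) (Quot.mk (pCompRel T T (op a) c) ⟨b, (g, f)⟩)

/-- Identities in the Eilenberg–Moore category, given by the unit `η`. -/
def emId (η : Functor.hom C ⟶ T) (a : C) : T.obj (op a, a) :=
  η.app (op a, a) (𝟙 a)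

/-- The axioms of a promonad `(T, μ, η)` on `C`: the multiplication `μ : T • T ⟶ T` is
associative and unital with respect to the unit `η : Hom_C ⟶ T`. -/
structure PromonadLaws (μ : profComp T T ⟶ T) (η : Functor.hom C ⟶ T) : Prop where
  assoc : ∀ {a b c d : C} (f : T.obj (op a, b)) (g : T.obj (op b, c))
      (h : T.obj (op c, d)),
    emComp T μ (emComp T μ f g) h = emComp T μ f (emComp T μ g h)
  id_comp : ∀ {a b : C} (f : T.obj (op a, b)), emComp T μ (emId T η a) f = f
  comp_id : ∀ {a b : C} (f : T.obj (op a, b)), emComp T μ f (emId T η b) = f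

/-- The Eilenberg–Moore category `T̃` of a promonad `T` on `C`: it has the same objects
as `C`. -/
def EMCat (T : Cᵒᵖ × C ⥤ Type u) : Type u := C

/-- The category structure on the Eilenberg–Moore category `T̃`: hom-sets
`T̃ (a, b) = T (a, b)`, composition induced by `μ`, identities `η (𝟙)`. -/
def emCategory (μ : profComp T T ⟶ T) (η : Functor.hom C ⟶ T)
    (L : PromonadLaws T μ η) : Category.{u} (EMCat T) where
  Hom a b := T.obj (op a, b)
  id a := emId T η a
  comp f g := emComp T μ f g
  id_comp := L.id_comp
  comp_id := L.comp_id
  assoc := L.assoc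

/-- A left `T`-module (from the point) over a promonad `(T, μ, η)`: a presheaf
`P : Cᵒᵖ ⥤ Type` equipped with an action `κ : T • P ⟶ P`, given via the coprojections
of the coend `(T • P) (a) = ∫^b P (b) × T (a, b)` by a balanced and natural family of
maps `P (b) → T (a, b) → P (a)`, associative for `μ` and unital for `η`. -/
structure PModule (μ : profComp T T ⟶ T) (η : Functor.hom C ⟶ T) where
  P : Cᵒᵖ ⥤ Type u
  act : ∀ (a b : C), P.obj (op b) → T.obj (op a, b) → P.obj (op a)
  act_balanced : ∀ (a b b' : C) (k : b ⟶ b') (x : P.obj (op b')) (t : T.obj (op a, b)),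
    act a b (P.map k.op x) t =
      act a b' x (T.map ((𝟙 (op a), k) : ((op a, b) : Cᵒᵖ × C) ⟶ (op a, b')) t)
  act_natural : ∀ (a a' b : C) (j : a' ⟶ a) (x : P.obj (op b)) (t : T.obj (op a, b)),
    P.map j.op (act a b x t) =
      act a' b x (T.map ((j.op, 𝟙 b) : ((op a, b) : Cᵒᵖ × C) ⟶ (op a', b)) t)
  act_mul : ∀ (a b c : C) (x : P.obj (op c)) (g : T.obj (op b, c)) (f : T.obj (op a, b)),
    act a b (act b c x g) f = act a c x (emComp T μ f g)
  act_one : ∀ (a : C) (x : P.obj (op a)), act a a x (emId T η a) = x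

/-- A morphism of left `T`-modules: a natural transformation of the underlying
presheaves commuting with the actions. -/
@[ext]
structure PModuleHom {μ : profComp T T ⟶ T} {η : Functor.hom C ⟶ T}
    (M N : PModule T μ η) where
  toNat : M.P ⟶ N.P
  compat : ∀ (a b : C) (x : M.P.obj (op b)) (t : T.obj (op a, b)),
    toNat.app (op a) (M.act a b x t) = N.act a b (toNat.app (op b) x) t

/-- The category of left `T`-modules. -/
instance pModuleCategory (μ : profComp T T ⟶ T) (η : Functor.hom C ⟶ T) :
    Category (PModule T μ η) where
  Hom M N := PModuleHom T M N
  id M := ⟨𝟙 M.P, by intros; rfl⟩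
  comp {M N O} f g := ⟨f.toNat ≫ g.toNat, by
    intro a b x t
    show g.toNat.app (op a) (f.toNat.app (op a) (M.act a b x t)) = _
    rw [f.compat, g.compat]
    rfl⟩
  id_comp f := by apply PModuleHom.ext; simp
  comp_id f := by apply PModuleHom.ext; simp
  assoc f g h := by apply PModuleHom.ext; simp

/-- The type of presheaves on the Eilenberg–Moore category `T̃`. -/
def emPresheafType (μ : profComp T T ⟶ T) (η : Functor.hom C ⟶ T)
    (L : PromonadLaws T μ η) : Type (u + 1) := by
  letI : Category (EMCat T) := emCategory T μ η L
  exact (EMCat T)ᵒᵖ ⥤ Type u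

/-- The category of presheaves on the Eilenberg–Moore category `T̃`. -/
def emPresheafCategory (μ : profComp T T ⟶ T) (η : Functor.hom C ⟶ T)
    (L : PromonadLaws T μ η) : Category.{max u u} (emPresheafType T μ η L) := by
  letI : Category (EMCat T) := emCategory T μ η L
  exact (inferInstance : Category ((EMCat T)ᵒᵖ ⥤ Type u))

section EilenbergMoore

variable {T} {μ : profComp T T ⟶ T} {η : Functor.hom C ⟶ T}

theorem eta_app_naturality {X Y : Cᵒᵖ × C} (φ : X ⟶ Y) (h : unop X.1 ⟶ X.2) :
    η.app Y (φ.1.unop ≫ h ≫ φ.2) = T.map φ (η.app X h) :=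
  NatTrans.naturality_apply η φ h

theorem eta_app_eq_map_snd_emId {a b : C} (f : a ⟶ b) :
    η.app (op a, b) f =
      T.map ((𝟙 (op a), f) : ((op a, a) : Cᵒᵖ × C) ⟶ (op a, b)) (emId T η a) := by
  simpa [emId] using
    eta_app_naturality ((𝟙 (op a), f) : ((op a, a) : Cᵒᵖ × C) ⟶ (op a, b)) (𝟙 a)

theorem eta_app_eq_map_fst_emId {b c : C} (g : b ⟶ c) :
    η.app (op b, c) g =
      T.map ((g.op, 𝟙 c) : ((op c, c) : Cᵒᵖ × C) ⟶ (op b, c)) (emId T η c) := by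
  simpa [emId] using
    eta_app_naturality ((g.op, 𝟙 c) : ((op c, c) : Cᵒᵖ × C) ⟶ (op b, c)) (𝟙 c)

theorem eta_emComp (L : PromonadLaws T μ η) {a b c : C} (f : a ⟶ b) (t : T.obj (op b, c)) :
    emComp T μ (η.app (op a, b) f) t =
      T.map ((f.op, 𝟙 c) : ((op b, c) : Cᵒᵖ × C) ⟶ (op a, c)) t := by
  rw [emComp, eta_app_eq_map_snd_emId, ← pCompRel_mk_eq T T f t (emId T η a)]
  exact L.id_comp _

theorem emComp_eta (L : PromonadLaws T μ η) {a b c : C} (t : T.obj (op a, b)) (g : b ⟶ c) :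
    emComp T μ t (η.app (op b, c) g) =
      T.map ((𝟙 (op a), g) : ((op a, b) : Cᵒᵖ × C) ⟶ (op a, c)) t := by
  rw [emComp, eta_app_eq_map_fst_emId, pCompRel_mk_eq T T g (emId T η c) t]
  exact L.comp_id _

theorem eta_app_comp (L : PromonadLaws T μ η) {a b c : C} (f : a ⟶ b) (g : b ⟶ c) :
    η.app (op a, c) (f ≫ g) = emComp T μ (η.app (op a, b) f) (η.app (op b, c) g) := by
  rw [eta_emComp L]
  simpa using eta_app_naturality ((f.op, 𝟙 c) : ((op b, c) : Cᵒᵖ × C) ⟶ (op a, c)) g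

theorem PModule.act_eta_app (M : PModule T μ η) {a b : C} (f : a ⟶ b) (x : M.P.obj (op b)) :
    M.act a b x (η.app (op a, b) f) = M.P.map f.op x := by
  rw [eta_app_eq_map_snd_emId, ← M.act_balanced, M.act_one]

variable (L : PromonadLaws T μ η)

def emInclusion : @Functor C _ (EMCat T) (emCategory T μ η L) := by
  letI := emCategory T μ η L
  exact
    { obj := id
      map := fun f => η.app _ f
      map_comp := eta_app_comp L }

def PModule.toPresheaf (M : PModule T μ η) : emPresheafType T μ η L := by
  letI := emCategory T μ η L
  exact
    { obj := fun a => M.P.obj (op a.unop)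
      map := fun t => TypeCat.ofHom fun x => M.act _ _ x t.unop
      map_id := fun a => by ext x; exact M.act_one a.unop x
      map_comp := fun t s => by ext x; exact (M.act_mul _ _ _ x t.unop s.unop).symm }

def PModule.ofPresheaf (P : emPresheafType T μ η L) : PModule T μ η := by
  letI := emCategory T μ η L
  let P' : (EMCat T)ᵒᵖ ⥤ Type u := P
  exact
    { P := (emInclusion L).op ⋙ P'
      act := fun a b x t => P'.map (Quiver.Hom.op (t : @Quiver.Hom (EMCat T) _ a b)) x
      act_balanced := fun a b b' k x t => by
        rw [← emComp_eta L t k]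
        exact (P'.map_comp_apply _ _ x).symm
      act_natural := fun a a' b j x t => by
        rw [← eta_emComp L j t]
        exact (P'.map_comp_apply _ _ x).symm
      act_mul := fun a b c x g f => (P'.map_comp_apply _ _ x).symm
      act_one := fun a x => P'.map_id_apply _ x }

def PModule.isoMk {M N : PModule T μ η} (e : M.P ≅ N.P)
    (h : ∀ a b x t, e.hom.app (op a) (M.act a b x t) = N.act a b (e.hom.app (op b) x) t) :
    M ≅ N where
  hom := ⟨e.hom, h⟩
  inv := ⟨e.inv, fun a b x t => by
    rw [← e.inv_hom_id_app_apply (op b) x, ← h, Iso.hom_inv_id_app_apply,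
      Iso.inv_hom_id_app_apply]⟩
  hom_inv_id := PModuleHom.ext e.hom_inv_id
  inv_hom_id := PModuleHom.ext e.inv_hom_id

def moduleToPresheaf :
    @Functor (PModule T μ η) _ (emPresheafType T μ η L) (emPresheafCategory T μ η L) := by
  letI := emCategory T μ η L
  letI := emPresheafCategory T μ η L
  exact
    { obj := fun M => M.toPresheaf L
      map := fun φ =>
        { app := fun a => φ.toNat.app (op a.unop)
          naturality := fun a b t => by ext x; exact φ.compat _ _ x t.unop } }

def presheafToModule :
    @Functor (emPresheafType T μ η L) (emPresheafCategory T μ η L) (PModule T μ η) _ := by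
  letI := emCategory T μ η L
  letI := emPresheafCategory T μ η L
  exact
    { obj := PModule.ofPresheaf L
      map := fun α =>
        { toNat := Functor.whiskerLeft (emInclusion L).op α
          compat := fun a b x t => NatTrans.naturality_apply α _ x } }

def PModule.equivPresheaf :
    @Equivalence (PModule T μ η) (emPresheafType T μ η L) _ (emPresheafCategory T μ η L) := by
  letI := emPresheafCategory T μ η L
  exact CategoryTheory.Equivalence.mk (moduleToPresheaf L) (presheafToModule L)
    (NatIso.ofComponents
      (fun M => PModule.isoMk
        (NatIso.ofComponents (fun X => Iso.refl (M.P.obj X))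
          fun j => by ext x; exact (M.act_eta_app j.unop x).symm)
        fun _ _ _ _ => rfl)
      fun _ => rfl)
    -- restricting along `emInclusion` and extending again gives back `P` definitionally
    (NatIso.ofComponents (fun P => Iso.refl P) fun _ => rfl)

end EilenbergMoore

/-- Modules over a promonad are presheaves on its Eilenberg–Moore category: for a
promonad `(T, μ, η)` on `C`, the category of left `T`-modules is equivalent to the
functor category `T̃ᵒᵖ ⥤ Type`, where `T̃` is the Eilenberg–Moore category of `T`. -/
theorem stmt_14 (μ : profComp T T ⟶ T) (η : Functor.hom C ⟶ T)
    (L : PromonadLaws T μ η) :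
    Nonempty (@CategoryTheory.Equivalence (PModule T μ η) (emPresheafType T μ η L)
      (pModuleCategory T μ η) (emPresheafCategory T μ η L)) :=
  ⟨PModule.equivPresheaf L⟩
end

section
/- Frobenius coend isomorphism from rigidity: let C be a monoidal category in which the object y has a left dual yᴸ (e.g., C left rigid). For all objects x, w, z, the composition map sending (f : x ⟶ w ⊗ c, g : c ⊗ y ⟶ z) to (𝟙_w ⊗ g) ∘ α_{w,c,y} ∘ (f ⊗ 𝟙_y) : x ⊗ y ⟶ w ⊗ z descends to the coend and induces a bijection ∫^{c ∈ C} Hom(x, w ⊗ c) × Hom(c ⊗ y, z) ≅ Hom(x ⊗ y, w ⊗ z). -/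
open CategoryTheory MonoidalCategory

universe v u

/-- The balancing relation realizing the coend `∫^c Hom(x, w ⊗ c) × Hom(c ⊗ y, z)` as a
quotient of `Σ c, Hom(x, w ⊗ c) × Hom(c ⊗ y, z)`: for `h : c ⟶ c'`, the pair
`((𝟙 w ⊗ h) ∘ f, g')` is identified with `(f, g' ∘ (h ⊗ 𝟙 y))`. -/
def frobRel {C : Type u} [Category.{v} C] [MonoidalCategory C] (x w z y : C) :
    (Σ c : C, (x ⟶ w ⊗ c) × (c ⊗ y ⟶ z)) →
      (Σ c : C, (x ⟶ w ⊗ c) × (c ⊗ y ⟶ z)) → Prop :=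
  fun X Y => ∃ (c c' : C) (h : c ⟶ c') (f : x ⟶ w ⊗ c) (g : c' ⊗ y ⟶ z),
    X = ⟨c', (f ≫ (w ◁ h), g)⟩ ∧ Y = ⟨c, (f, (h ▷ y) ≫ g)⟩

section Aux

variable {C : Type u} [Category.{v} C] [MonoidalCategory C]

/-- `tensorRightHomEquiv.symm` turns whiskered composites back into the Frobenius form. -/
theorem frob_key (x w z y yL : C) [ExactPairing y yL]
    (c : C) (f : x ⟶ w ⊗ c) (g : c ⊗ y ⟶ z) :
    (f ▷ y) ≫ (α_ w c y).hom ≫ (w ◁ g) =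
      (tensorRightHomEquiv x y yL (w ⊗ z)).symm
        ((f ≫ (w ◁ tensorRightHomEquiv c y yL z g)) ≫ (α_ w z yL).inv) := by
  rw [Category.assoc, tensorRightHomEquiv_symm_naturality]
  have h := tensorRightHomEquiv_tensor (Y := y) (Y' := yL) (tensorRightHomEquiv c y yL z g) (𝟙 w)
  simp only [id_tensorHom, Equiv.symm_apply_apply] at h
  rw [h]

theorem frob_sound (x w z y : C) (c c' : C) (h : c ⟶ c') (f : x ⟶ w ⊗ c)
    (g : c' ⊗ y ⟶ z) :
    ((f ≫ (w ◁ h)) ▷ y) ≫ (α_ w c' y).hom ≫ (w ◁ g) =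
      (f ▷ y) ≫ (α_ w c y).hom ≫ (w ◁ ((h ▷ y) ≫ g)) := by
  simp

end Aux

/-- Frobenius coend isomorphism from rigidity: if `y` has a left dual `yL` (an exact
pairing with coevaluation `𝟙_C ⟶ y ⊗ yL` and evaluation `yL ⊗ y ⟶ 𝟙_C`), then the
composition map sending `(f : x ⟶ w ⊗ c, g : c ⊗ y ⟶ z)` to
`(𝟙 w ⊗ g) ∘ α ∘ (f ⊗ 𝟙 y) : x ⊗ y ⟶ w ⊗ z` descends to the coend and induces a
bijection `∫^c Hom(x, w ⊗ c) × Hom(c ⊗ y, z) ≅ Hom(x ⊗ y, w ⊗ z)`. -/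
theorem stmt_15 {C : Type u} [Category.{v} C] [MonoidalCategory C]
    (x w z y yL : C) [ExactPairing y yL] :
    ∃ φ : Quot (frobRel x w z y) → (x ⊗ y ⟶ w ⊗ z),
      (∀ (c : C) (f : x ⟶ w ⊗ c) (g : c ⊗ y ⟶ z),
        φ (Quot.mk (frobRel x w z y) ⟨c, (f, g)⟩) =
          (f ▷ y) ≫ (α_ w c y).hom ≫ (w ◁ g)) ∧
      Function.Bijective φ := by
  refine ⟨Quot.lift (fun p => (p.2.1 ▷ y) ≫ (α_ w p.1 y).hom ≫ (w ◁ p.2.2)) ?_, fun c f g => rfl, ?_⟩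
  · rintro _ _ ⟨c, c', h, f, g, rfl, rfl⟩
    exact frob_sound x w z y c c' h f g
  · set e := fun (X Z : C) => tensorRightHomEquiv X y yL Z with he
    set ψ : (x ⊗ y ⟶ w ⊗ z) → Quot (frobRel x w z y) := fun k =>
      Quot.mk (frobRel x w z y)
        ⟨z ⊗ yL, (e x (w ⊗ z) k ≫ (α_ w z yL).hom, (e (z ⊗ yL) z).symm (𝟙 (z ⊗ yL)))⟩ with hψ
    have hright : Function.LeftInverse (Quot.lift
        (fun p => (p.2.1 ▷ y) ≫ (α_ w p.1 y).hom ≫ (w ◁ p.2.2))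
        (by rintro _ _ ⟨c, c', h, f, g, rfl, rfl⟩; exact frob_sound x w z y c c' h f g)) ψ := by
      intro k
      show ((e x (w ⊗ z) k ≫ (α_ w z yL).hom) ▷ y) ≫ (α_ w (z ⊗ yL) y).hom ≫
          (w ◁ (e (z ⊗ yL) z).symm (𝟙 (z ⊗ yL))) = k
      rw [frob_key x w z y yL (z ⊗ yL) (e x (w ⊗ z) k ≫ (α_ w z yL).hom)
          ((e (z ⊗ yL) z).symm (𝟙 (z ⊗ yL)))]
      simp [he]
    have hleft : Function.LeftInverse ψ (Quot.lift
        (fun p => (p.2.1 ▷ y) ≫ (α_ w p.1 y).hom ≫ (w ◁ p.2.2))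
        (by rintro _ _ ⟨c, c', h, f, g, rfl, rfl⟩; exact frob_sound x w z y c c' h f g)) := by
      refine Quot.ind ?_
      rintro ⟨c, f, g⟩
      show Quot.mk (frobRel x w z y)
          ⟨z ⊗ yL, (e x (w ⊗ z) ((f ▷ y) ≫ (α_ w c y).hom ≫ (w ◁ g)) ≫ (α_ w z yL).hom,
            (e (z ⊗ yL) z).symm (𝟙 (z ⊗ yL)))⟩ = Quot.mk (frobRel x w z y) ⟨c, (f, g)⟩
      have hF : e x (w ⊗ z) ((f ▷ y) ≫ (α_ w c y).hom ≫ (w ◁ g)) ≫ (α_ w z yL).hom =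
          f ≫ (w ◁ e c z g) := by
        rw [frob_key x w z y yL c f g]
        simp [he]
      rw [hF]
      refine Quot.sound ⟨c, z ⊗ yL, e c z g, f, (e (z ⊗ yL) z).symm (𝟙 (z ⊗ yL)), rfl, ?_⟩
      congr 1
      ext
      · rfl
      have : (e c z g ▷ y) ≫ (e (z ⊗ yL) z).symm (𝟙 (z ⊗ yL)) = g := by
        rw [← tensorRightHomEquiv_symm_naturality (e c z g) (𝟙 (z ⊗ yL))]
        simp [he]
      simp [this]
    exact ⟨hleft.injective, hright.surjective⟩
end

section
/- A lax module structure over a rigid monoidal category is strong: let C be a monoidal category in which every object has a left dual. Let F : C ⥤ C be a functor equipped with a natural transformation β with components β_{x,m} : x ⊗ F(m) ⟶ F(x ⊗ m) satisfying associativity (β_{x⊗y, m} ∘ α_{x,y,F m} = F(α_{x,y,m}) ∘ β_{x, y⊗m} ∘ (𝟙_x ⊗ β_{y,m}), appropriately bracketed) and unitality (β_{𝟙, m} agrees with the left unitors). Then every β_{x,m} is an isomorphism, with inverse constructed from the duality data: explicitly using the coevaluation 𝟙 ⟶ x ⊗ xᴸ, the lax structure β_{xᴸ, x⊗m}, and the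 evaluation xᴸ ⊗ x ⟶ 𝟙 together with F applied to the unit/triangle morphisms. -/
/-!
The inverse of `β x m` is
`F (x ⊗ m) ⟶ x ⊗ xᴸ ⊗ F (x ⊗ m) ⟶ x ⊗ F (xᴸ ⊗ x ⊗ m) ⟶ x ⊗ F m`,
built from the coevaluation, `β xᴸ (x ⊗ m)` and `F` of the evaluation. Associativity and
unitality of `β` let it slide past a tensored evaluation or coevaluation, and after that
both composites collapse to the zigzag identity tensored with an object.
-/

open CategoryTheory MonoidalCategory

universe v u

namespace LaxModuleEndofunctor

variable {C : Type u} [Category.{v} C] [MonoidalCategory C]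

def coevOn {x y : C} (c : 𝟙_ C ⟶ x ⊗ y) (n : C) : n ⟶ x ⊗ y ⊗ n :=
  (λ_ n).inv ≫ c ▷ n ≫ (α_ x y n).hom

def evOn {x y : C} (e : y ⊗ x ⟶ 𝟙_ C) (m : C) : y ⊗ x ⊗ m ⟶ m :=
  (α_ y x m).inv ≫ e ▷ m ≫ (λ_ m).hom

theorem coevOn_naturality {x y : C} (c : 𝟙_ C ⟶ x ⊗ y) {n n' : C} (f : n ⟶ n') :
    f ≫ coevOn c n' = coevOn c n ≫ x ◁ y ◁ f := by
  simp only [coevOn, leftUnitor_inv_naturality_assoc, whisker_exchange_assoc,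
    associator_naturality_right, Category.assoc]

theorem coevOn_whiskerLeft_evOn {x y : C} (c : 𝟙_ C ⟶ x ⊗ y) (e : y ⊗ x ⟶ 𝟙_ C)
    (hzig : (λ_ x).inv ≫ c ▷ x ≫ (α_ x y x).hom ≫ x ◁ e ≫ (ρ_ x).hom = 𝟙 x) (m : C) :
    coevOn c (x ⊗ m) ≫ x ◁ evOn e m = 𝟙 (x ⊗ m) := by
  have hzig_m := congrArg (· ▷ m) hzig
  simp only [comp_whiskerRight, id_whiskerRight] at hzig_m
  rw [← hzig_m, coevOn, evOn]
  monoidal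

structure IsLaxLeftModule (F : C ⥤ C) (β : ∀ x m : C, x ⊗ F.obj m ⟶ F.obj (x ⊗ m)) : Prop where
  naturality : ∀ {x x' m m' : C} (f : x ⟶ x') (g : m ⟶ m'),
    (f ⊗ₘ F.map g) ≫ β x' m' = β x m ≫ F.map (f ⊗ₘ g)
  assoc : ∀ x y m : C,
    β (x ⊗ y) m ≫ F.map (α_ x y m).hom = (α_ x y (F.obj m)).hom ≫ (x ◁ β y m) ≫ β x (y ⊗ m)
  unit : ∀ m : C, β (𝟙_ C) m = (λ_ (F.obj m)).hom ≫ F.map (λ_ m).inv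

namespace IsLaxLeftModule

variable {F : C ⥤ C} {β : ∀ x m : C, x ⊗ F.obj m ⟶ F.obj (x ⊗ m)}

theorem whiskerRight_comp (h : IsLaxLeftModule F β) {x x' : C} (f : x ⟶ x') (m : C) :
    f ▷ F.obj m ≫ β x' m = β x m ≫ F.map (f ▷ m) := by
  simpa [MonoidalCategory.tensorHom_def] using h.naturality f (𝟙 m)

theorem whiskerLeft_map_comp (h : IsLaxLeftModule F β) (x : C) {m m' : C} (g : m ⟶ m') :
    x ◁ F.map g ≫ β x m' = β x m ≫ F.map (x ◁ g) := by
  simpa [MonoidalCategory.tensorHom_def] using h.naturality (𝟙 x) g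

theorem whiskerLeft_β_comp_β (h : IsLaxLeftModule F β) (x y m : C) :
    x ◁ β y m ≫ β x (y ⊗ m) = (α_ x y (F.obj m)).inv ≫ β (x ⊗ y) m ≫ F.map (α_ x y m).hom := by
  rw [h.assoc, Iso.inv_hom_id_assoc]

theorem whiskerLeft_β_comp_β_comp_map_evOn (h : IsLaxLeftModule F β)
    {x y : C} (e : y ⊗ x ⟶ 𝟙_ C) (m : C) :
    y ◁ β x m ≫ β y (x ⊗ m) ≫ F.map (evOn e m) = evOn e (F.obj m) := by
  unfold evOn
  rw [reassoc_of% h.whiskerLeft_β_comp_β, F.map_comp, F.map_comp, Iso.map_hom_inv_id_assoc,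
    ← reassoc_of% h.whiskerRight_comp, h.unit]
  simp only [Category.assoc, Iso.map_inv_hom_id, Category.comp_id]

theorem coevOn_comp_whiskerLeft_β_comp_β (h : IsLaxLeftModule F β)
    {x y : C} (c : 𝟙_ C ⟶ x ⊗ y) (n : C) :
    coevOn c (F.obj n) ≫ x ◁ β y n ≫ β x (y ⊗ n) = F.map (coevOn c n) := by
  unfold coevOn
  rw [h.whiskerLeft_β_comp_β, Category.assoc, Category.assoc, Iso.hom_inv_id_assoc,
    reassoc_of% h.whiskerRight_comp, h.unit]
  simp only [Category.assoc, Iso.inv_hom_id_assoc, F.map_comp]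

theorem isIso_of_zigzag (h : IsLaxLeftModule F β) {x y : C} (c : 𝟙_ C ⟶ x ⊗ y)
    (e : y ⊗ x ⟶ 𝟙_ C)
    (hzig : (λ_ x).inv ≫ c ▷ x ≫ (α_ x y x).hom ≫ x ◁ e ≫ (ρ_ x).hom = 𝟙 x) (m : C) :
    IsIso (β x m) := by
  refine ⟨coevOn c (F.obj (x ⊗ m)) ≫ x ◁ (β y (x ⊗ m) ≫ F.map (evOn e m)), ?_, ?_⟩
  · rw [reassoc_of% coevOn_naturality, ← whiskerLeft_comp,
      h.whiskerLeft_β_comp_β_comp_map_evOn, coevOn_whiskerLeft_evOn c e hzig]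
  · rw [whiskerLeft_comp, Category.assoc, Category.assoc, h.whiskerLeft_map_comp,
      reassoc_of% h.coevOn_comp_whiskerLeft_β_comp_β, ← F.map_comp,
      coevOn_whiskerLeft_evOn c e hzig, F.map_id]

end IsLaxLeftModule

end LaxModuleEndofunctor

theorem stmt_16_general {C : Type u} [Category.{v} C] [MonoidalCategory C]
    (dual : C → C)
    (ev : ∀ x : C, dual x ⊗ x ⟶ 𝟙_ C)
    (coev : ∀ x : C, 𝟙_ C ⟶ x ⊗ dual x)
    (hzig₁ : ∀ x : C,
      (λ_ x).inv ≫ (coev x ▷ x) ≫ (α_ x (dual x) x).hom ≫ (x ◁ ev x) ≫ (ρ_ x).hom = 𝟙 x)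
    (F : C ⥤ C)
    (β : ∀ x m : C, x ⊗ F.obj m ⟶ F.obj (x ⊗ m))
    (hnat : ∀ {x x' m m' : C} (f : x ⟶ x') (g : m ⟶ m'),
      (f ⊗ₘ F.map g) ≫ β x' m' = β x m ≫ F.map (f ⊗ₘ g))
    (hassoc : ∀ x y m : C,
      β (x ⊗ y) m ≫ F.map (α_ x y m).hom =
        (α_ x y (F.obj m)).hom ≫ (x ◁ β y m) ≫ β x (y ⊗ m))
    (hunit : ∀ m : C, β (𝟙_ C) m = (λ_ (F.obj m)).hom ≫ F.map (λ_ m).inv) :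
    ∀ x m : C, IsIso (β x m) :=
  fun x m => LaxModuleEndofunctor.IsLaxLeftModule.isIso_of_zigzag ⟨hnat, hassoc, hunit⟩
    (coev x) (ev x) (hzig₁ x) m

/-- A lax module structure over a rigid monoidal category is strong: if every object `x` of a
monoidal category `C` has a left dual (given by `dual x` with evaluation
`ev x : dual x ⊗ x ⟶ 𝟙_C` and coevaluation `coev x : 𝟙_C ⟶ x ⊗ dual x` satisfying the
zigzag identities), and `(F, β)` is a lax module endofunctor of `C` (with `β` natural,
associative and unital), then every structure map `β x m : x ⊗ F m ⟶ F (x ⊗ m)` is an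
isomorphism. -/
theorem stmt_16 {C : Type u} [Category.{v} C] [MonoidalCategory C]
    (dual : C → C)
    (ev : ∀ x : C, dual x ⊗ x ⟶ 𝟙_ C)
    (coev : ∀ x : C, 𝟙_ C ⟶ x ⊗ dual x)
    (hzig₁ : ∀ x : C,
      (λ_ x).inv ≫ (coev x ▷ x) ≫ (α_ x (dual x) x).hom ≫ (x ◁ ev x) ≫ (ρ_ x).hom = 𝟙 x)
    (hzig₂ : ∀ x : C,
      (ρ_ (dual x)).inv ≫ (dual x ◁ coev x) ≫ (α_ (dual x) x (dual x)).inv ≫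
        (ev x ▷ dual x) ≫ (λ_ (dual x)).hom = 𝟙 (dual x))
    (F : C ⥤ C)
    (β : ∀ x m : C, x ⊗ F.obj m ⟶ F.obj (x ⊗ m))
    (hnat : ∀ {x x' m m' : C} (f : x ⟶ x') (g : m ⟶ m'),
      (f ⊗ₘ F.map g) ≫ β x' m' = β x m ≫ F.map (f ⊗ₘ g))
    (hassoc : ∀ x y m : C,
      β (x ⊗ y) m ≫ F.map (α_ x y m).hom =
        (α_ x y (F.obj m)).hom ≫ (x ◁ β y m) ≫ β x (y ⊗ m))
    (hunit : ∀ m : C, β (𝟙_ C) m = (λ_ (F.obj m)).hom ≫ F.map (λ_ m).inv) :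
    ∀ x m : C, IsIso (β x m) :=
  stmt_16_general dual ev coev hzig₁ F β hnat hassoc hunit
end
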